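/- arXiv:1403.3714 — 7 statements merged into one kernel-verified Lean document; each statement's English description precedes it below -/
import Mathlib

section
/- Suppose ψ : (0,∞) → (0,∞) is twice differentiable with ψ'(ξ) > 0 for all ξ > 0, and for some α > 0 and all ξ > 0 one has -ξψ''(ξ)/ψ'(ξ) ≤ 1 - α/2. Then for all ξ > 0, ξψ'(ξ)/(ψ(ξ) - ψ(0⁺)) ≥ α/2, where ψ(0⁺) denotes the limit of ψ at 0 from the right. -/
open Filter Set Topology

/-! Under the scaling condition, `t ↦ t ψ'(t) - (α/2) ψ(t)` has derivative
`(1 - α/2) ψ' + t ψ'' ≥ 0`, so it is nondecreasing on `(0, ∞)`. As `t → 0⁺` it is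
bounded below by `-(α/2) ψ(t) → -(α/2) ψ(0⁺)`, whence `ξ ψ'(ξ) ≥ (α/2) (ψ(ξ) - ψ(0⁺))`;
dividing by `ψ(ξ) - ψ(0⁺) > 0` (`ψ` is strictly increasing) gives the claim. -/

lemma monotoneOn_Ioi_of_hasDerivAt_nonneg {f f' : ℝ → ℝ} {a : ℝ}
    (hf : ∀ x ∈ Ioi a, HasDerivAt f (f' x) x) (hf' : ∀ x ∈ Ioi a, 0 ≤ f' x) :
    MonotoneOn f (Ioi a) :=
  monotoneOn_of_hasDerivWithinAt_nonneg (convex_Ioi a)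
    (fun x hx ↦ (hf x hx).continuousAt.continuousWithinAt)
    (by simpa only [interior_Ioi] using fun x hx ↦ (hf x hx).hasDerivWithinAt)
    (by simpa only [interior_Ioi] using hf')

lemma strictMonoOn_Ioi_of_hasDerivAt_pos {f f' : ℝ → ℝ} {a : ℝ}
    (hf : ∀ x ∈ Ioi a, HasDerivAt f (f' x) x) (hf' : ∀ x ∈ Ioi a, 0 < f' x) :
    StrictMonoOn f (Ioi a) :=
  strictMonoOn_of_hasDerivWithinAt_pos (convex_Ioi a)
    (fun x hx ↦ (hf x hx).continuousAt.continuousWithinAt)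
    (by simpa only [interior_Ioi] using fun x hx ↦ (hf x hx).hasDerivWithinAt)
    (by simpa only [interior_Ioi] using hf')

lemma MonotoneOn.le_of_tendsto_nhdsGT_of_le {f g : ℝ → ℝ} {a L x : ℝ}
    (hg : MonotoneOn g (Ioi a)) (hf : Tendsto f (𝓝[>] a) (𝓝 L))
    (hfg : ∀ t ∈ Ioi a, f t ≤ g t) (hx : x ∈ Ioi a) : L ≤ g x :=
  le_of_tendsto hf <| by
    filter_upwards [Ioo_mem_nhdsGT hx] with t ht using (hfg t ht.1).trans (hg ht.1 hx ht.2.le)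

lemma StrictMonoOn.lt_of_tendsto_nhdsGT {f : ℝ → ℝ} {a L x : ℝ}
    (hf : StrictMonoOn f (Ioi a)) (hL : Tendsto f (𝓝[>] a) (𝓝 L)) (hx : x ∈ Ioi a) :
    L < f x := by
  obtain ⟨y, hay, hyx⟩ := exists_between (mem_Ioi.1 hx)
  exact (hf.monotoneOn.le_of_tendsto_nhdsGT_of_le hL (fun _ _ ↦ le_rfl) hay).trans_lt
    (hf hay hx hyx)

lemma monotoneOn_mul_deriv_sub_of_scaling {ψ ψ' ψ'' : ℝ → ℝ} {c : ℝ}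
    (hd1 : ∀ ξ ∈ Ioi (0:ℝ), HasDerivAt ψ (ψ' ξ) ξ)
    (hd2 : ∀ ξ ∈ Ioi (0:ℝ), HasDerivAt ψ' (ψ'' ξ) ξ)
    (hd1pos : ∀ ξ ∈ Ioi (0:ℝ), 0 < ψ' ξ)
    (hscal : ∀ ξ ∈ Ioi (0:ℝ), -ξ * ψ'' ξ / ψ' ξ ≤ 1 - c) :
    MonotoneOn (fun t ↦ t * ψ' t - c * ψ t) (Ioi 0) := by
  refine monotoneOn_Ioi_of_hasDerivAt_nonneg (f' := fun t ↦ 1 * ψ' t + t * ψ'' t - c * ψ' t)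
    (fun t ht ↦ ((hasDerivAt_id t).mul (hd2 t ht)).sub ((hd1 t ht).const_mul c)) fun t ht ↦ ?_
  have h := (div_le_iff₀ (hd1pos t ht)).1 (hscal t ht)
  linarith

theorem scaling_lower_ratio_general (ψ ψ' ψ'' : ℝ → ℝ) (α ψ0 : ℝ)
    (hd1 : ∀ ξ ∈ Set.Ioi (0:ℝ), HasDerivAt ψ (ψ' ξ) ξ)
    (hd2 : ∀ ξ ∈ Set.Ioi (0:ℝ), HasDerivAt ψ' (ψ'' ξ) ξ)
    (hd1pos : ∀ ξ ∈ Set.Ioi (0:ℝ), 0 < ψ' ξ)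
    (hscal : ∀ ξ ∈ Set.Ioi (0:ℝ), -ξ * ψ'' ξ / ψ' ξ ≤ 1 - α / 2)
    (hlim : Tendsto ψ (nhdsWithin 0 (Set.Ioi 0)) (nhds ψ0)) :
    ∀ ξ ∈ Set.Ioi (0:ℝ), α / 2 ≤ ξ * ψ' ξ / (ψ ξ - ψ0) := by
  intro ξ hξ
  have hψ0 : ψ0 < ψ ξ :=
    (strictMonoOn_Ioi_of_hasDerivAt_pos hd1 hd1pos).lt_of_tendsto_nhdsGT hlim hξ
  have hgap : -(α / 2) * ψ0 ≤ ξ * ψ' ξ - α / 2 * ψ ξ :=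
    (monotoneOn_mul_deriv_sub_of_scaling hd1 hd2 hd1pos hscal).le_of_tendsto_nhdsGT_of_le
      (hlim.const_mul _) (fun t ht ↦ by nlinarith [mul_pos ht (hd1pos t ht)]) hξ
  rw [le_div_iff₀ (sub_pos.2 hψ0)]
  linarith

theorem scaling_lower_ratio (ψ ψ' ψ'' : ℝ → ℝ) (α ψ0 : ℝ) (hα : 0 < α)
    (hd1 : ∀ ξ ∈ Set.Ioi (0:ℝ), HasDerivAt ψ (ψ' ξ) ξ)
    (hd2 : ∀ ξ ∈ Set.Ioi (0:ℝ), HasDerivAt ψ' (ψ'' ξ) ξ)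
    (hpos : ∀ ξ ∈ Set.Ioi (0:ℝ), 0 < ψ ξ)
    (hd1pos : ∀ ξ ∈ Set.Ioi (0:ℝ), 0 < ψ' ξ)
    (hscal : ∀ ξ ∈ Set.Ioi (0:ℝ), -ξ * ψ'' ξ / ψ' ξ ≤ 1 - α / 2)
    (hlim : Tendsto ψ (nhdsWithin 0 (Set.Ioi 0)) (nhds ψ0)) :
    ∀ ξ ∈ Set.Ioi (0:ℝ), α / 2 ≤ ξ * ψ' ξ / (ψ ξ - ψ0) :=
  scaling_lower_ratio_general ψ ψ' ψ'' α ψ0 hd1 hd2 hd1pos hscal hlim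
end

section
/- Suppose ψ : (0,∞) → (0,∞) is twice differentiable with ψ'(ξ) > 0 for all ξ > 0, and for some β > 0 and all ξ > 0 one has -ξψ''(ξ)/ψ'(ξ) ≥ 1 - β/2. Then for all ξ > 0, ξψ'(ξ)/(ψ(ξ) - ψ(0⁺)) ≤ β/2. -/
/-! `F(ξ) = ξ ψ'(ξ) - (β/2) ψ(ξ)` has `F' = (1 - β/2) ψ' + ξ ψ'' ≤ 0`, so `F` is antitone.
If the claim failed at `ξ`, then `δ := F(ξ) + (β/2) ψ(0⁺) > 0` and, since `ψ ≥ ψ(0⁺)`,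
every `x < ξ` would satisfy `x ψ'(x) ≥ F(x) + (β/2) ψ(0⁺) ≥ δ`. Then `ψ - δ log` is
monotone, so `ψ(x) ≤ C + δ log x → -∞` as `x → 0⁺`, contradicting `ψ(x) → ψ(0⁺)`. -/

open Filter Set

open scoped Topology

theorem monotoneOn_of_hasDerivAt_nonneg_of_isOpen {D : Set ℝ} (hD : Convex ℝ D) (hDo : IsOpen D)
    {f f' : ℝ → ℝ} (hf : ∀ x ∈ D, HasDerivAt f (f' x) x) (hf' : ∀ x ∈ D, 0 ≤ f' x) :
    MonotoneOn f D :=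
  monotoneOn_of_hasDerivWithinAt_nonneg hD (fun x hx => (hf x hx).continuousAt.continuousWithinAt)
    (by rw [hDo.interior_eq]; exact fun x hx => (hf x hx).hasDerivWithinAt)
    (by rwa [hDo.interior_eq])

theorem antitoneOn_of_hasDerivAt_nonpos_of_isOpen {D : Set ℝ} (hD : Convex ℝ D) (hDo : IsOpen D)
    {f f' : ℝ → ℝ} (hf : ∀ x ∈ D, HasDerivAt f (f' x) x) (hf' : ∀ x ∈ D, f' x ≤ 0) :
    AntitoneOn f D :=
  antitoneOn_of_hasDerivWithinAt_nonpos hD (fun x hx => (hf x hx).continuousAt.continuousWithinAt)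
    (by rw [hDo.interior_eq]; exact fun x hx => (hf x hx).hasDerivWithinAt)
    (by rwa [hDo.interior_eq])

theorem MonotoneOn.le_of_tendsto_nhdsGT {α β : Type*} [LinearOrder α] [TopologicalSpace α]
    [OrderTopology α] [DenselyOrdered α] [Preorder β] [TopologicalSpace β]
    [OrderClosedTopology β] {f : α → β} {a x : α} {L : β} (hf : MonotoneOn f (Ioi a))
    (hlim : Tendsto f (𝓝[>] a) (𝓝 L)) (hx : a < x) :
    L ≤ f x :=
  have := nhdsGT_neBot_of_exists_gt ⟨x, hx⟩
  le_of_tendsto hlim <| mem_of_superset (Ioo_mem_nhdsGT hx) fun _ hy =>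
    hf hy.1 (mem_Ioi.2 hx) hy.2.le

theorem tendsto_atBot_of_le_mul_deriv {f f' : ℝ → ℝ} {b δ : ℝ} (hb : 0 < b) (hδ : 0 < δ)
    (hf : ∀ x ∈ Ioo 0 b, HasDerivAt f (f' x) x) (hf' : ∀ x ∈ Ioo 0 b, δ ≤ x * f' x) :
    Tendsto f (𝓝[>] 0) atBot := by
  have hmono : MonotoneOn (fun x => f x - δ * Real.log x) (Ioo 0 b) := by
    refine monotoneOn_of_hasDerivAt_nonneg_of_isOpen (convex_Ioo 0 b) isOpen_Ioo
      (fun x hx => (hf x hx).sub ((Real.hasDerivAt_log hx.1.ne').const_mul δ)) fun x hx => ?_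
    rw [sub_nonneg, ← div_eq_mul_inv, div_le_iff₀' hx.1]
    exact hf' x hx
  have hc : b / 2 ∈ Ioo 0 b := ⟨half_pos hb, half_lt_self hb⟩
  have hlog :
      Tendsto (fun x => f (b / 2) - δ * Real.log (b / 2) + δ * Real.log x) (𝓝[>] 0) atBot :=
    tendsto_atBot_add_const_left _ _ (Real.tendsto_log_nhdsGT_zero.const_mul_atBot hδ)
  refine tendsto_atBot_mono' _ ?_ hlog
  filter_upwards [Ioo_mem_nhdsGT hc.1] with x hx
  have hgx := hmono ⟨hx.1, hx.2.trans hc.2⟩ hc hx.2.le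
  linarith

theorem antitoneOn_mul_deriv_sub_mul {ψ ψ' ψ'' : ℝ → ℝ} {c : ℝ}
    (hψ : ∀ x ∈ Ioi (0:ℝ), HasDerivAt ψ (ψ' x) x)
    (hψ' : ∀ x ∈ Ioi (0:ℝ), HasDerivAt ψ' (ψ'' x) x)
    (hψ'_pos : ∀ x ∈ Ioi (0:ℝ), 0 < ψ' x)
    (hscal : ∀ x ∈ Ioi (0:ℝ), 1 - c ≤ -x * ψ'' x / ψ' x) :
    AntitoneOn (fun x => x * ψ' x - c * ψ x) (Ioi 0) := by
  refine antitoneOn_of_hasDerivAt_nonpos_of_isOpen (convex_Ioi 0) isOpen_Ioi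
    (fun x hx => ((hasDerivAt_id' x).mul (hψ' x hx)).sub ((hψ x hx).const_mul c)) fun x hx => ?_
  have hscal_x := (le_div_iff₀ (hψ'_pos x hx)).1 (hscal x hx)
  linarith

theorem scaling_upper_ratio_general (ψ ψ' ψ'' : ℝ → ℝ) (β ψ0 : ℝ) (hβ : 0 < β)
    (hd1 : ∀ ξ ∈ Set.Ioi (0:ℝ), HasDerivAt ψ (ψ' ξ) ξ)
    (hd2 : ∀ ξ ∈ Set.Ioi (0:ℝ), HasDerivAt ψ' (ψ'' ξ) ξ)
    (hd1pos : ∀ ξ ∈ Set.Ioi (0:ℝ), 0 < ψ' ξ)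
    (hscal : ∀ ξ ∈ Set.Ioi (0:ℝ), 1 - β / 2 ≤ -ξ * ψ'' ξ / ψ' ξ)
    (hlim : Tendsto ψ (nhdsWithin 0 (Set.Ioi 0)) (nhds ψ0)) :
    ∀ ξ ∈ Set.Ioi (0:ℝ), ξ * ψ' ξ / (ψ ξ - ψ0) ≤ β / 2 := by
  intro ξ hξ
  have hψ0 : ∀ x ∈ Ioi (0:ℝ), ψ0 ≤ ψ x := fun x hx =>
    (monotoneOn_of_hasDerivAt_nonneg_of_isOpen (convex_Ioi 0) isOpen_Ioi hd1
      fun x hx => (hd1pos x hx).le).le_of_tendsto_nhdsGT hlim hx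
  have hF := antitoneOn_mul_deriv_sub_mul hd1 hd2 hd1pos hscal
  have key : ξ * ψ' ξ ≤ β / 2 * (ψ ξ - ψ0) := by
    by_contra! hlt
    refine not_tendsto_atBot_of_tendsto_nhds hlim <|
      tendsto_atBot_of_le_mul_deriv hξ (sub_pos.2 hlt) (fun x hx => hd1 x hx.1) fun x hx => ?_
    have hFx := hF hx.1 hξ hx.2.le
    have hψx := mul_le_mul_of_nonneg_left (hψ0 x hx.1) (half_pos hβ).le
    linarith
  exact div_le_of_le_mul₀ (sub_nonneg.2 (hψ0 ξ hξ)) (half_pos hβ).le key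

theorem scaling_upper_ratio (ψ ψ' ψ'' : ℝ → ℝ) (β ψ0 : ℝ) (hβ : 0 < β)
    (hd1 : ∀ ξ ∈ Set.Ioi (0:ℝ), HasDerivAt ψ (ψ' ξ) ξ)
    (hd2 : ∀ ξ ∈ Set.Ioi (0:ℝ), HasDerivAt ψ' (ψ'' ξ) ξ)
    (hpos : ∀ ξ ∈ Set.Ioi (0:ℝ), 0 < ψ ξ)
    (hd1pos : ∀ ξ ∈ Set.Ioi (0:ℝ), 0 < ψ' ξ)
    (hscal : ∀ ξ ∈ Set.Ioi (0:ℝ), 1 - β / 2 ≤ -ξ * ψ'' ξ / ψ' ξ)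
    (hlim : Tendsto ψ (nhdsWithin 0 (Set.Ioi 0)) (nhds ψ0)) :
    ∀ ξ ∈ Set.Ioi (0:ℝ), ξ * ψ' ξ / (ψ ξ - ψ0) ≤ β / 2 :=
  scaling_upper_ratio_general ψ ψ' ψ'' β ψ0 hβ hd1 hd2 hd1pos hscal hlim
end

section
/- Let ψ, φ : (0,∞) → (0,∞) be twice differentiable with ψ', φ' > 0 and ψ'', φ'' ≤ 0 everywhere, and suppose -ψ''(ξ)/ψ'(ξ) ≤ -φ''(ξ)/φ'(ξ) for all ξ > 0. Then for all 0 < ξ₁ < ξ₂, (ψ(ξ₂) - ψ(ξ₁))/ψ'(ξ₁) ≥ (φ(ξ₂) - φ(ξ₁))/φ'(ξ₁). -/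
open Set

theorem normalized_increment_comparison (ψ φ ψ' φ' ψ'' φ'' : ℝ → ℝ)
    (hdψ : ∀ ξ ∈ Set.Ioi (0:ℝ), HasDerivAt ψ (ψ' ξ) ξ)
    (hdφ : ∀ ξ ∈ Set.Ioi (0:ℝ), HasDerivAt φ (φ' ξ) ξ)
    (hdψ' : ∀ ξ ∈ Set.Ioi (0:ℝ), HasDerivAt ψ' (ψ'' ξ) ξ)
    (hdφ' : ∀ ξ ∈ Set.Ioi (0:ℝ), HasDerivAt φ' (φ'' ξ) ξ)
    (hψpos : ∀ ξ ∈ Set.Ioi (0:ℝ), 0 < ψ ξ)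
    (hφpos : ∀ ξ ∈ Set.Ioi (0:ℝ), 0 < φ ξ)
    (hψ'pos : ∀ ξ ∈ Set.Ioi (0:ℝ), 0 < ψ' ξ)
    (hφ'pos : ∀ ξ ∈ Set.Ioi (0:ℝ), 0 < φ' ξ)
    (hψ'' : ∀ ξ ∈ Set.Ioi (0:ℝ), ψ'' ξ ≤ 0)
    (hφ'' : ∀ ξ ∈ Set.Ioi (0:ℝ), φ'' ξ ≤ 0)
    (hcomp : ∀ ξ ∈ Set.Ioi (0:ℝ), -ψ'' ξ / ψ' ξ ≤ -φ'' ξ / φ' ξ) :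
    ∀ ξ₁ ξ₂ : ℝ, 0 < ξ₁ → ξ₁ < ξ₂ →
      (φ ξ₂ - φ ξ₁) / φ' ξ₁ ≤ (ψ ξ₂ - ψ ξ₁) / ψ' ξ₁ := by
  -- h = log ψ' - log φ' is monotone on Ioi 0
  set h : ℝ → ℝ := fun t => Real.log (ψ' t) - Real.log (φ' t) with hh
  have hderiv : ∀ x ∈ Set.Ioi (0:ℝ),
      HasDerivAt h (ψ'' x / ψ' x - φ'' x / φ' x) x := by
    intro x hx
    exact ((hdψ' x hx).log (hψ'pos x hx).ne').sub ((hdφ' x hx).log (hφ'pos x hx).ne')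
  have hmono : MonotoneOn h (Set.Ioi (0:ℝ)) := by
    apply monotoneOn_of_deriv_nonneg (convex_Ioi 0)
      (fun x hx => (hderiv x hx).continuousAt.continuousWithinAt)
      (fun x hx => by
        rw [interior_Ioi] at hx
        exact (hderiv x hx).differentiableAt.differentiableWithinAt)
    · intro x hx
      rw [interior_Ioi] at hx
      rw [(hderiv x hx).deriv]
      have := hcomp x hx
      have h1 : φ'' x / φ' x ≤ ψ'' x / ψ' x := by
        have := neg_le_neg this
        simpa [neg_div] using this
      linarith
  intro ξ₁ ξ₂ h1 h12
  have hξ₁ : ξ₁ ∈ Set.Ioi (0:ℝ) := h1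
  -- key pointwise inequality on (ξ₁, ξ₂)
  have key : ∀ x ∈ Set.Ioo ξ₁ ξ₂, φ' x * ψ' ξ₁ ≤ ψ' x * φ' ξ₁ := by
    intro x hx
    have hxpos : x ∈ Set.Ioi (0:ℝ) := lt_trans h1 hx.1
    have := hmono hξ₁ hxpos (le_of_lt hx.1)
    have hlog : Real.log (ψ' ξ₁ * φ' x) ≤ Real.log (ψ' x * φ' ξ₁) := by
      rw [Real.log_mul (hψ'pos ξ₁ hξ₁).ne' (hφ'pos x hxpos).ne',
        Real.log_mul (hψ'pos x hxpos).ne' (hφ'pos ξ₁ hξ₁).ne']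
      simp only [hh] at this
      linarith
    have := (Real.log_le_log_iff
      (mul_pos (hψ'pos ξ₁ hξ₁) (hφ'pos x hxpos))
      (mul_pos (hψ'pos x hxpos) (hφ'pos ξ₁ hξ₁))).1 hlog
    linarith
  -- G is monotone on [ξ₁, ξ₂]
  set G : ℝ → ℝ := fun t => ψ t * φ' ξ₁ - φ t * ψ' ξ₁ with hG
  have hGd : ∀ x ∈ Set.Icc ξ₁ ξ₂,
      HasDerivAt G (ψ' x * φ' ξ₁ - φ' x * ψ' ξ₁) x := by
    intro x hx
    have hxpos : x ∈ Set.Ioi (0:ℝ) := lt_of_lt_of_le h1 hx.1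
    exact ((hdψ x hxpos).mul_const _).sub ((hdφ x hxpos).mul_const _)
  have hGmono : MonotoneOn G (Set.Icc ξ₁ ξ₂) := by
    apply monotoneOn_of_deriv_nonneg (convex_Icc ξ₁ ξ₂)
      (fun x hx => (hGd x hx).continuousAt.continuousWithinAt)
      (fun x hx => by
        rw [interior_Icc] at hx
        exact (hGd x (Set.Ioo_subset_Icc_self hx)).differentiableAt.differentiableWithinAt)
    · intro x hx
      rw [interior_Icc] at hx
      rw [(hGd x (Set.Ioo_subset_Icc_self hx)).deriv]
      have := key x hx
      linarith
  have hGle : G ξ₁ ≤ G ξ₂ :=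
    hGmono (Set.left_mem_Icc.2 h12.le) (Set.right_mem_Icc.2 h12.le) h12.le
  have hψ'1 := hψ'pos ξ₁ hξ₁
  have hφ'1 := hφ'pos ξ₁ hξ₁
  rw [div_le_div_iff₀ hφ'1 hψ'1]
  simp only [hG] at hGle
  nlinarith
end

section
/- Let ψ, φ : (0,∞) → (0,∞) be twice differentiable with ψ', φ' > 0 and ψ'', φ'' ≤ 0 everywhere, and suppose -ψ''(ξ)/ψ'(ξ) ≤ -φ''(ξ)/φ'(ξ) for all ξ > 0. Then for all λ, ξ > 0 with ξ ≠ λ, λ²ψ'(λ²)/(ψ(ξ²) - ψ(λ²)) - λ²/(ξ² - λ²) ≤ λ²φ'(λ²)/(φ(ξ²) - φ(λ²)) - λ²/(ξ² - λ²). -/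
/-!
The hypothesis `-ψ''/ψ' ≤ -φ''/φ'` says exactly that `ψ'/φ'` is nondecreasing.
Fixing `a = λ²`, the function `F(t) = φ'(a) ψ(t) - ψ'(a) φ(t)` has derivative
`φ'(a) φ'(t) (ψ'(t)/φ'(t) - ψ'(a)/φ'(a))`, which changes sign from `-` to `+` at `t = a`,
so `F(a) ≤ F(ξ²)`. Since `ψ` and `φ` are increasing, `ψ(ξ²) - ψ(a)` and `φ(ξ²) - φ(a)`
have the same sign, and dividing `F(a) ≤ F(ξ²)` by their product gives the comparison.
-/

open Set

lemma div_le_div_of_mul_le_mul_of_mul_pos {p q x y : ℝ} (hxy : 0 < x * y)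
    (h : p * y ≤ q * x) : p / x ≤ q / y := by
  have hx : x ≠ 0 := left_ne_zero_of_mul hxy.ne'
  have hy : y ≠ 0 := right_ne_zero_of_mul hxy.ne'
  refine sub_nonpos.1 ?_
  rw [div_sub_div p q hx hy]
  exact div_nonpos_of_nonpos_of_nonneg (by linarith) hxy.le

lemma StrictMonoOn.sub_mul_sub_pos {s : Set ℝ} {f g : ℝ → ℝ} (hf : StrictMonoOn f s)
    (hg : StrictMonoOn g s) {a b : ℝ} (ha : a ∈ s) (hb : b ∈ s) (hab : b ≠ a) :
    0 < (f b - f a) * (g b - g a) := by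
  rcases hab.lt_or_gt with hlt | hlt
  · exact mul_pos_of_neg_of_neg (sub_neg.2 (hf hb ha hlt)) (sub_neg.2 (hg hb ha hlt))
  · exact mul_pos (sub_pos.2 (hf ha hb hlt)) (sub_pos.2 (hg ha hb hlt))

section Deriv

variable {f g f' g' : ℝ → ℝ}

lemma strictMonoOn_of_hasDerivAt_pos {s : Set ℝ} (hs : Convex ℝ s)
    (hf : ∀ x ∈ s, HasDerivAt f (f' x) x) (hf' : ∀ x ∈ s, 0 < f' x) : StrictMonoOn f s :=
  strictMonoOn_of_hasDerivWithinAt_pos hs (HasDerivAt.continuousOn hf)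
    (fun x hx => (hf x (interior_subset hx)).hasDerivWithinAt)
    (fun x hx => hf' x (interior_subset hx))

lemma monotoneOn_div_of_logDeriv_le {s : Set ℝ} (hs : Convex ℝ s)
    (hf : ∀ x ∈ s, HasDerivAt f (f' x) x) (hg : ∀ x ∈ s, HasDerivAt g (g' x) x)
    (hf₀ : ∀ x ∈ s, 0 < f x) (hg₀ : ∀ x ∈ s, 0 < g x)
    (hle : ∀ x ∈ s, g' x / g x ≤ f' x / f x) : MonotoneOn (fun x => f x / g x) s := by
  refine monotoneOn_of_hasDerivWithinAt_nonneg hs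
    (f' := fun x => (f' x * g x - f x * g' x) / g x ^ 2)
    ((HasDerivAt.continuousOn hf).div (HasDerivAt.continuousOn hg) fun x hx => (hg₀ x hx).ne')
    (fun x hx => ?_) (fun x hx => ?_) <;> replace hx := interior_subset hx
  · exact ((hf x hx).div (hg x hx) (hg₀ x hx).ne').hasDerivWithinAt
  · have hcross := (div_le_div_iff₀ (hg₀ x hx) (hf₀ x hx)).1 (hle x hx)
    exact div_nonneg (by linarith) (sq_nonneg _)

lemma mul_sub_le_mul_sub_of_monotoneOn_div_deriv {c a b : ℝ}
    (hf : ∀ x ∈ Ioi c, HasDerivAt f (f' x) x) (hg : ∀ x ∈ Ioi c, HasDerivAt g (g' x) x)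
    (hg' : ∀ x ∈ Ioi c, 0 < g' x) (hmono : MonotoneOn (fun x => f' x / g' x) (Ioi c))
    (ha : a ∈ Ioi c) (hb : b ∈ Ioi c) :
    f' a * (g b - g a) ≤ g' a * (f b - f a) := by
  set F := fun x => g' a * f x - f' a * g x
  have hF : ∀ x ∈ Ioi c, HasDerivAt F (g' a * g' x * (f' x / g' x - f' a / g' a)) x := by
    intro x hx
    refine (((hf x hx).const_mul (g' a)).sub ((hg x hx).const_mul (f' a))).congr_deriv ?_
    have hgx := (hg' x hx).ne'
    have hga := (hg' a ha).ne'
    field_simp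
  have hdiff : DifferentiableOn ℝ F (Ioi c) := fun x hx =>
    (hF x hx).differentiableAt.differentiableWithinAt
  have hmin : IsMinOn F (Ioi c) a := by
    refine isMinOn_Ioi_of_deriv (hF a ha).continuousAt (hdiff.mono Ioo_subset_Ioi_self)
      (hdiff.mono (Ioi_subset_Ioi ha.le)) (fun x hx => ?_) (fun x hx => ?_)
    · rw [(hF x hx.1).deriv]
      exact mul_nonpos_of_nonneg_of_nonpos (mul_pos (hg' a ha) (hg' x hx.1)).le
        (sub_nonpos.2 (hmono hx.1 ha hx.2.le))
    · have hx' : x ∈ Ioi c := (mem_Ioi.1 ha).trans hx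
      rw [(hF x hx').deriv]
      exact mul_nonneg (mul_pos (hg' a ha) (hg' x hx')).le
        (sub_nonneg.2 (hmono ha hx' hx.le))
  have hFab : F a ≤ F b := hmin hb
  simp only [F] at hFab
  linarith

end Deriv

theorem doubly_regularized_comparison_general (ψ φ ψ' φ' ψ'' φ'' : ℝ → ℝ)
    (hdψ : ∀ ξ ∈ Set.Ioi (0:ℝ), HasDerivAt ψ (ψ' ξ) ξ)
    (hdφ : ∀ ξ ∈ Set.Ioi (0:ℝ), HasDerivAt φ (φ' ξ) ξ)
    (hdψ' : ∀ ξ ∈ Set.Ioi (0:ℝ), HasDerivAt ψ' (ψ'' ξ) ξ)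
    (hdφ' : ∀ ξ ∈ Set.Ioi (0:ℝ), HasDerivAt φ' (φ'' ξ) ξ)
    (hψ'pos : ∀ ξ ∈ Set.Ioi (0:ℝ), 0 < ψ' ξ)
    (hφ'pos : ∀ ξ ∈ Set.Ioi (0:ℝ), 0 < φ' ξ)
    (hcomp : ∀ ξ ∈ Set.Ioi (0:ℝ), -ψ'' ξ / ψ' ξ ≤ -φ'' ξ / φ' ξ) :
    ∀ l ξ : ℝ, 0 < l → 0 < ξ → ξ ≠ l →
      l ^ 2 * ψ' (l ^ 2) / (ψ (ξ ^ 2) - ψ (l ^ 2)) - l ^ 2 / (ξ ^ 2 - l ^ 2) ≤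
        l ^ 2 * φ' (l ^ 2) / (φ (ξ ^ 2) - φ (l ^ 2)) - l ^ 2 / (ξ ^ 2 - l ^ 2) := by
  intro l ξ hl hξ hne
  have ha : l ^ 2 ∈ Ioi (0:ℝ) := pow_pos hl 2
  have hb : ξ ^ 2 ∈ Ioi (0:ℝ) := pow_pos hξ 2
  have hba : ξ ^ 2 ≠ l ^ 2 := fun h => hne ((pow_left_inj₀ hξ.le hl.le two_ne_zero).1 h)
  have hratio : MonotoneOn (fun x => ψ' x / φ' x) (Ioi 0) :=
    monotoneOn_div_of_logDeriv_le (convex_Ioi 0) hdψ' hdφ' hψ'pos hφ'pos fun x hx => by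
      simpa only [neg_div, neg_le_neg_iff] using hcomp x hx
  have hcross := mul_sub_le_mul_sub_of_monotoneOn_div_deriv hdψ hdφ hφ'pos hratio ha hb
  have hsign := (strictMonoOn_of_hasDerivAt_pos (convex_Ioi 0) hdψ hψ'pos).sub_mul_sub_pos
    (strictMonoOn_of_hasDerivAt_pos (convex_Ioi 0) hdφ hφ'pos) ha hb hba
  simp only [mul_div_assoc]
  exact sub_le_sub_right (mul_le_mul_of_nonneg_left
    (div_le_div_of_mul_le_mul_of_mul_pos hsign hcross) (sq_nonneg l)) _

theorem doubly_regularized_comparison (ψ φ ψ' φ' ψ'' φ'' : ℝ → ℝ)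
    (hdψ : ∀ ξ ∈ Set.Ioi (0:ℝ), HasDerivAt ψ (ψ' ξ) ξ)
    (hdφ : ∀ ξ ∈ Set.Ioi (0:ℝ), HasDerivAt φ (φ' ξ) ξ)
    (hdψ' : ∀ ξ ∈ Set.Ioi (0:ℝ), HasDerivAt ψ' (ψ'' ξ) ξ)
    (hdφ' : ∀ ξ ∈ Set.Ioi (0:ℝ), HasDerivAt φ' (φ'' ξ) ξ)
    (hψpos : ∀ ξ ∈ Set.Ioi (0:ℝ), 0 < ψ ξ)
    (hφpos : ∀ ξ ∈ Set.Ioi (0:ℝ), 0 < φ ξ)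
    (hψ'pos : ∀ ξ ∈ Set.Ioi (0:ℝ), 0 < ψ' ξ)
    (hφ'pos : ∀ ξ ∈ Set.Ioi (0:ℝ), 0 < φ' ξ)
    (hψ'' : ∀ ξ ∈ Set.Ioi (0:ℝ), ψ'' ξ ≤ 0)
    (hφ'' : ∀ ξ ∈ Set.Ioi (0:ℝ), φ'' ξ ≤ 0)
    (hcomp : ∀ ξ ∈ Set.Ioi (0:ℝ), -ψ'' ξ / ψ' ξ ≤ -φ'' ξ / φ' ξ) :
    ∀ l ξ : ℝ, 0 < l → 0 < ξ → ξ ≠ l →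
      l ^ 2 * ψ' (l ^ 2) / (ψ (ξ ^ 2) - ψ (l ^ 2)) - l ^ 2 / (ξ ^ 2 - l ^ 2) ≤
        l ^ 2 * φ' (l ^ 2) / (φ (ξ ^ 2) - φ (l ^ 2)) - l ^ 2 / (ξ ^ 2 - l ^ 2) :=
  doubly_regularized_comparison_general ψ φ ψ' φ' ψ'' φ'' hdψ hdφ hdψ' hdφ' hψ'pos hφ'pos hcomp
end

section
/- Let g : ℝ → (0,∞) be integrable, decreasing on (0,∞), and even. Let Fg denote its Fourier transform. Then for all x ∈ ℝ, Fg(0) - Fg(x) ≥ (1/2)∫₀^∞ min(ξ²x², 4) g(ξ) dξ. -/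
/-!
With `k(u) = 1 - cos u - min(u², 4) / 4`, folding the even integrands onto `(0, ∞)` reduces the
claim to `∫_{ξ > 0} k(xξ) g(ξ) dξ ≥ 0`. The primitive of `k` is nonnegative on `[0, ∞)`: `k ≥ 0`
on `[0, 2]`, and `∫₀^s k = 4/3 - sin s` for `s ≥ 2`. Slicing `g` into its superlevel sets, which
for a decreasing `g` are intervals `(0, r(t))` up to a null set, gives
`∫_{ξ > 0} k(xξ) g(ξ) dξ = ∫_{t > 0} ∫₀^{r(t)} k(xξ) dξ dt ≥ 0`; this layer-cake decomposition
plays the role of the integration by parts against `-dg`.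
-/

open MeasureTheory Set Real
open scoped ENNReal

theorem integral_mul_eq_integral_setIntegral_lt {α : Type*} [MeasurableSpace α] {μ : Measure α}
    [SFinite μ] {f k : α → ℝ} (hf0 : 0 ≤ᵐ[μ] f) (hf : AEMeasurable f μ)
    (hk : AEStronglyMeasurable k μ) (hkf : Integrable (fun x => k x * f x) μ) :
    ∫ x, k x * f x ∂μ = ∫ t in Ioi 0, ∫ x in {x | t < f x}, k x ∂μ := by
  wlog hfm : Measurable f generalizing f with H
  · obtain ⟨f', hf'm, hff'⟩ := hf
    have hkff' : (fun x => k x * f x) =ᵐ[μ] fun x => k x * f' x :=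
      hff'.mono fun x hx => by simp only [hx]
    rw [integral_congr_ae hkff', H (hf0.congr Filter.EventuallyEq.rfl hff') hf'm.aemeasurable
      (hkf.congr hkff') hf'm]
    refine setIntegral_congr_fun measurableSet_Ioi fun t _ => setIntegral_congr_set ?_
    exact (hff'.fun_comp (t < ·)).symm
  set F : α → ℝ → ℝ := fun x => (Ioo 0 (f x)).indicator fun _ => k x
  have hsection (x : α) (hx : 0 ≤ f x) (c : ℝ) :
      ∫ t, (Ioo 0 (f x)).indicator (fun _ => c) t = c * f x := by
    rw [integral_indicator_const _ measurableSet_Ioo, Real.volume_real_Ioo_of_le hx, sub_zero,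
      smul_eq_mul, mul_comm]
  have hFm : AEStronglyMeasurable (Function.uncurry F) (μ.prod volume) := by
    have hE : MeasurableSet {p : α × ℝ | p.2 ∈ Ioo 0 (f p.1)} :=
      (measurableSet_lt measurable_const measurable_snd).inter
        (measurableSet_lt measurable_snd (hfm.comp measurable_fst))
    exact (hk.comp_fst.indicator hE).congr
      (ae_of_all _ fun p => by simp [F, indicator_apply, Function.uncurry_def])
  have hFi : Integrable (Function.uncurry F) (μ.prod volume) := by
    refine (integrable_prod_iff hFm).2 ⟨ae_of_all _ fun x => ?_, hkf.norm.congr ?_⟩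
    · change Integrable ((Ioo 0 (f x)).indicator fun _ => k x)
      exact (integrable_indicator_iff measurableSet_Ioo).2
        (integrableOn_const (C := k x) measure_Ioo_lt_top.ne)
    · filter_upwards [hf0] with x hx
      simp only [Function.uncurry_apply_pair, F, norm_indicator_eq_indicator_norm]
      rw [hsection x hx, norm_mul, Real.norm_of_nonneg hx]
  have hslice (t : ℝ) :
      ∫ x, F x t ∂μ = (Ioi 0).indicator (fun t => ∫ x in {x | t < f x}, k x ∂μ) t := by
    by_cases ht : 0 < t
    · rw [indicator_of_mem (mem_Ioi.2 ht),
        ← integral_indicator (measurableSet_lt measurable_const hfm)]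
      congr with x
      simp [F, indicator_apply, ht]
    · rw [indicator_of_notMem (notMem_Ioi.2 (not_lt.1 ht))]
      simp [F, ht]
  calc ∫ x, k x * f x ∂μ
      _ = ∫ x, ∫ t, F x t ∂volume ∂μ := by
        refine integral_congr_ae ?_
        filter_upwards [hf0] with x hx
        exact (hsection x hx (k x)).symm
      _ = ∫ t, ∫ x, F x t ∂μ := integral_integral_swap hFi
      _ = _ := by
        simp_rw [hslice]
        exact integral_indicator measurableSet_Ioi

theorem ae_eq_Ioc_sSup {S : Set ℝ} (hS : volume S ≠ ∞) (hS0 : S ⊆ Ioi 0)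
    (hdown : ∀ b ∈ S, Ioc 0 b ⊆ S) : S =ᵐ[volume] Ioc 0 (sSup S) := by
  rcases S.eq_empty_or_nonempty with rfl | ⟨a, ha⟩
  · simp
  have hbdd : BddAbove S := ⟨(volume S).toReal, fun b hb => by
    have hb' := measure_mono (μ := volume) (hdown b hb)
    rw [Real.volume_Ioc, sub_zero] at hb'
    exact (ENNReal.ofReal_le_iff_le_toReal hS).1 hb'⟩
  have hIoo : Ioo 0 (sSup S) ⊆ S := fun x hx => by
    obtain ⟨b, hb, hxb⟩ := exists_lt_of_lt_csSup ⟨a, ha⟩ hx.2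
    exact hdown b hb ⟨hx.1, hxb.le⟩
  have hIoc : S ⊆ Ioc 0 (sSup S) := fun b hb => ⟨hS0 hb, le_csSup hbdd hb⟩
  exact (ae_eq_of_subset_of_measure_ge hIoo
    ((measure_mono hIoc).trans_eq (measure_congr Ioo_ae_eq_Ioc).symm)
    measurableSet_Ioo.nullMeasurableSet hS).symm.trans Ioo_ae_eq_Ioc

theorem setIntegral_Ioi_mul_nonneg_of_antitoneOn {k g : ℝ → ℝ}
    (hk : AEStronglyMeasurable k (volume.restrict (Ioi 0)))
    (hk0 : ∀ r, 0 ≤ r → 0 ≤ ∫ x in 0..r, k x)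
    (hg0 : ∀ x ∈ Ioi 0, 0 ≤ g x) (hg : AntitoneOn g (Ioi 0)) (hgi : IntegrableOn g (Ioi 0))
    (hkg : IntegrableOn (fun x => k x * g x) (Ioi 0)) :
    0 ≤ ∫ x in Ioi 0, k x * g x := by
  rw [integral_mul_eq_integral_setIntegral_lt (ae_restrict_of_forall_mem measurableSet_Ioi hg0)
    hgi.aemeasurable hk hkg]
  refine setIntegral_nonneg measurableSet_Ioi fun t (ht : 0 < t) => ?_
  rw [Measure.restrict_restrict' measurableSet_Ioi]
  have hfin : volume ({x | t < g x} ∩ Ioi 0) ≠ ∞ := by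
    have hsub : {x | t < g x} ∩ Ioi 0 ⊆ {x | t ≤ g x} ∩ Ioi 0 :=
      inter_subset_inter_left _ fun x (hx : t < g x) => hx.le
    refine ((measure_mono hsub).trans_lt ?_).ne
    rw [← Measure.restrict_apply' measurableSet_Ioi]
    exact hgi.measure_ge_lt_top ht
  have hdown : ∀ b ∈ {x | t < g x} ∩ Ioi 0, Ioc 0 b ⊆ {x | t < g x} ∩ Ioi 0 :=
    fun b hb x hx => ⟨hb.1.trans_le (hg hx.1 hb.2 hx.2), hx.1⟩
  have hr : 0 ≤ sSup ({x | t < g x} ∩ Ioi 0) := Real.sSup_nonneg fun x hx => le_of_lt hx.2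
  rw [setIntegral_congr_set (ae_eq_Ioc_sSup hfin inter_subset_right hdown),
    ← intervalIntegral.integral_of_le hr]
  exact hk0 _ hr

theorem integral_eq_two_mul_setIntegral_Ioi_of_even {f : ℝ → ℝ} (hf : ∀ x, f (-x) = f x) :
    ∫ x, f x = 2 * ∫ x in Ioi 0, f x := by
  rw [← integral_comp_abs]
  congr 1 with x
  rcases abs_choice x with h | h <;> rw [h]
  exact (hf x).symm

theorem cos_le_one_sub_sq_div_four {u : ℝ} (h0 : 0 ≤ u) (h2 : u ≤ 2) : cos u ≤ 1 - u ^ 2 / 4 := by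
  have hsin : u / 2 - (u / 2) ^ 3 / 6 ≤ sin (u / 2) := sin_ge_sub_cube (by positivity)
  have hhalf : sin (u / 2) ^ 2 = 1 / 2 - cos u / 2 := by
    rw [sin_sq_eq_half_sub, mul_div_cancel₀ u two_ne_zero]
  have hlow : 5 * u / 12 ≤ sin (u / 2) := by
    nlinarith [mul_nonneg h0 (by nlinarith : (0 : ℝ) ≤ 4 - u ^ 2)]
  nlinarith

theorem integral_one_sub_cos_sub_min_sq_nonneg {s : ℝ} (hs : 0 ≤ s) :
    0 ≤ ∫ u in 0..s, (1 - cos u - min (u ^ 2) 4 / 4) := by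
  rcases le_or_gt s 2 with hs2 | hs2
  · refine intervalIntegral.integral_nonneg hs fun u hu => ?_
    linarith [cos_le_one_sub_sq_div_four hu.1 (hu.2.trans hs2), min_le_left (u ^ 2) 4]
  have hcont : Continuous fun u : ℝ => 1 - cos u - min (u ^ 2) 4 / 4 := by fun_prop
  have hquad : ∫ u in (0 : ℝ)..2, (1 - cos u - min (u ^ 2) 4 / 4) = 4 / 3 - sin 2 := by
    have hF : ∀ u ∈ uIcc (0 : ℝ) 2, 1 - cos u - min (u ^ 2) 4 / 4 = 1 - cos u - u ^ 2 / 4 := by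
      intro u hu
      rw [uIcc_of_le zero_le_two] at hu
      rw [min_eq_left (by nlinarith [hu.1, hu.2])]
    have hderiv : ∀ u : ℝ, HasDerivAt (fun u => u - sin u - u ^ 3 / 12)
        (1 - cos u - u ^ 2 / 4) u := fun u => by
      refine (((hasDerivAt_id' u).fun_sub (hasDerivAt_sin u)).fun_sub
        ((hasDerivAt_pow 3 u).div_const 12)).congr_deriv ?_
      norm_num
      ring
    rw [intervalIntegral.integral_congr hF, intervalIntegral.integral_eq_sub_of_hasDerivAt
      (fun u _ => hderiv u)
      ((by fun_prop : Continuous fun u : ℝ => 1 - cos u - u ^ 2 / 4).intervalIntegrable 0 2)]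
    norm_num
    ring
  have hlin : ∫ u in (2 : ℝ)..s, (1 - cos u - min (u ^ 2) 4 / 4) = sin 2 - sin s := by
    have hF : ∀ u ∈ uIcc (2 : ℝ) s, 1 - cos u - min (u ^ 2) 4 / 4 = -cos u := by
      intro u hu
      rw [uIcc_of_le hs2.le] at hu
      rw [min_eq_right (by nlinarith [hu.1])]
      ring
    rw [intervalIntegral.integral_congr hF, intervalIntegral.integral_neg, integral_cos]
    ring
  rw [← intervalIntegral.integral_add_adjacent_intervals (hcont.intervalIntegrable 0 2)
    (hcont.intervalIntegrable 2 s), hquad, hlin]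
  linarith [sin_le_one s]

theorem integral_one_sub_cos_mul_sub_min_sq_nonneg (c : ℝ) {r : ℝ} (hr : 0 ≤ r) :
    0 ≤ ∫ ξ in 0..r, (1 - cos (c * ξ) - min (ξ ^ 2 * c ^ 2) 4 / 4) := by
  have habs (ξ : ℝ) : 1 - cos (c * ξ) - min (ξ ^ 2 * c ^ 2) 4 / 4
      = 1 - cos (|c| * ξ) - min ((|c| * ξ) ^ 2) 4 / 4 := by
    rw [← cos_abs (c * ξ), ← cos_abs (|c| * ξ), abs_mul, abs_mul, abs_abs, mul_pow, sq_abs,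
      mul_comm (c ^ 2)]
  simp_rw [habs]
  rcases (abs_nonneg c).eq_or_lt with hc | hc
  · simp [← hc]
  rw [intervalIntegral.integral_comp_mul_left
    (fun u => 1 - cos u - min (u ^ 2) 4 / 4) hc.ne', mul_zero]
  exact smul_nonneg (inv_nonneg.2 hc.le)
    (integral_one_sub_cos_sub_min_sq_nonneg (mul_nonneg hc.le hr))

theorem setIntegral_Ioi_one_sub_cos_sub_min_mul_nonneg {g : ℝ → ℝ} (hg0 : ∀ ξ ∈ Ioi 0, 0 ≤ g ξ)
    (hg : AntitoneOn g (Ioi 0)) (hgi : IntegrableOn g (Ioi 0)) (x : ℝ) :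
    0 ≤ ∫ ξ in Ioi 0, (1 - cos (x * ξ) - min (ξ ^ 2 * x ^ 2) 4 / 4) * g ξ := by
  refine setIntegral_Ioi_mul_nonneg_of_antitoneOn (by fun_prop : Continuous _).aestronglyMeasurable
    (fun _ => integral_one_sub_cos_mul_sub_min_sq_nonneg x) hg0 hg hgi
    (hgi.bdd_mul (c := 2) (by fun_prop) (ae_of_all _ fun ξ => abs_le.2 ⟨?_, ?_⟩))
  · linarith [cos_le_one (x * ξ), min_le_right (ξ ^ 2 * x ^ 2) 4]
  · linarith [neg_one_le_cos (x * ξ), le_min (by positivity : 0 ≤ ξ ^ 2 * x ^ 2) zero_le_four]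

theorem fourier_diff_lower (g : ℝ → ℝ)
    (hpos : ∀ ξ : ℝ, 0 < g ξ)
    (hint : Integrable g)
    (hmono : AntitoneOn g (Set.Ioi 0))
    (heven : ∀ ξ : ℝ, g (-ξ) = g ξ) :
    ∀ x : ℝ,
      (1 / 2) * ∫ ξ in Set.Ioi (0:ℝ), min (ξ ^ 2 * x ^ 2) 4 * g ξ ≤
        (∫ ξ : ℝ, g ξ) - (∫ ξ : ℝ, g ξ * Real.cos (x * ξ)) := by
  intro x
  have hcos : Integrable fun ξ => (1 - cos (x * ξ)) * g ξ :=
    hint.bdd_mul (c := 2) (by fun_prop) (ae_of_all _ fun ξ =>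
      abs_le.2 ⟨by linarith [cos_le_one (x * ξ)], by linarith [neg_one_le_cos (x * ξ)]⟩)
  have hmin : Integrable fun ξ => min (ξ ^ 2 * x ^ 2) 4 * g ξ :=
    hint.bdd_mul (c := 4) (by fun_prop) (ae_of_all _ fun ξ =>
      abs_le.2 ⟨by linarith [le_min (by positivity : 0 ≤ ξ ^ 2 * x ^ 2) zero_le_four],
        min_le_right _ _⟩)
  have hcore := setIntegral_Ioi_one_sub_cos_sub_min_mul_nonneg (fun ξ _ => (hpos ξ).le) hmono
    hint.integrableOn x
  have hsplit : ∫ ξ in Ioi 0, (1 - cos (x * ξ) - min (ξ ^ 2 * x ^ 2) 4 / 4) * g ξ =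
      (∫ ξ in Ioi 0, (1 - cos (x * ξ)) * g ξ) -
        (∫ ξ in Ioi 0, min (ξ ^ 2 * x ^ 2) 4 * g ξ) / 4 := by
    rw [← integral_div, ← integral_sub hcos.integrableOn (hmin.integrableOn.div_const 4)]
    congr 1 with ξ
    ring
  calc (1 / 2) * ∫ ξ in Ioi 0, min (ξ ^ 2 * x ^ 2) 4 * g ξ
      ≤ 2 * ∫ ξ in Ioi 0, (1 - cos (x * ξ)) * g ξ := by linarith
    _ = ∫ ξ, (1 - cos (x * ξ)) * g ξ :=
        (integral_eq_two_mul_setIntegral_Ioi_of_even fun ξ => by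
          rw [mul_neg, cos_neg, heven]).symm
    _ = (∫ ξ, g ξ) - ∫ ξ, g ξ * cos (x * ξ) := by
        rw [← integral_sub hint (hint.mul_bdd (c := 1) (by fun_prop)
          (ae_of_all _ fun ξ => abs_cos_le_one _))]
        congr 1 with ξ
        ring
end

section
/- Let g : ℝ → (0,∞) be integrable, decreasing on (0,∞), and even, and let Fg denote its Fourier transform. Then for all x₁, x₂ ∈ ℝ, |Fg(x₁) - Fg(x₂)| ≤ ∫₀^∞ min(ξ|x₁ - x₂|, 2)·min(ξ|x₁ + x₂|, 2)·g(ξ) dξ. -/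
/-!
Writing `cos a - cos b = -2 sin ((a + b) / 2) sin ((a - b) / 2)` and bounding each sine by
`min (|s|, 1)` gives `|cos (x₁ ξ) - cos (x₂ ξ)| ≤ min (|ξ| |x₁ - x₂|, 2) min (|ξ| |x₁ + x₂|, 2) / 2`.
Integrating this against `g ≥ 0` over `ℝ` and folding the even integrand onto `(0, ∞)` gives the
bound.
-/

open MeasureTheory Set Real

lemma abs_sin_le_min_abs_one (s : ℝ) : |sin s| ≤ min |s| 1 :=
  le_min abs_sin_le_abs (abs_sin_le_one s)

lemma abs_cos_sub_cos_le_min_mul_min (a b : ℝ) :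
    |cos a - cos b| ≤ min |a - b| 2 * min |a + b| 2 / 2 := by
  have half_min (t : ℝ) : min |t / 2| 1 = min |t| 2 / 2 := by
    rw [abs_div, abs_two, ← min_div_div_right zero_le_two, div_self two_ne_zero]
  have hsum := abs_sin_le_min_abs_one ((a + b) / 2)
  have hdiff := abs_sin_le_min_abs_one ((a - b) / 2)
  rw [half_min] at hsum hdiff
  calc |cos a - cos b| = 2 * (|sin ((a + b) / 2)| * |sin ((a - b) / 2)|) := by
        rw [cos_sub_cos, mul_assoc, abs_mul, abs_mul]; norm_num
    _ ≤ 2 * (min |a + b| 2 / 2 * (min |a - b| 2 / 2)) := by gcongr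
    _ = min |a - b| 2 * min |a + b| 2 / 2 := by ring

lemma abs_mul_cos_sub_mul_cos_le {c : ℝ} (hc : 0 ≤ c) (x₁ x₂ ξ : ℝ) :
    |c * cos (x₁ * ξ) - c * cos (x₂ * ξ)| ≤
      min (|ξ| * |x₁ - x₂|) 2 * min (|ξ| * |x₁ + x₂|) 2 * c / 2 := by
  have h := abs_cos_sub_cos_le_min_mul_min (x₁ * ξ) (x₂ * ξ)
  rw [← sub_mul, ← add_mul, abs_mul, abs_mul, mul_comm |x₁ - x₂|, mul_comm |x₁ + x₂|] at h
  rw [← mul_sub, abs_mul, abs_of_nonneg hc]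
  calc c * |cos (x₁ * ξ) - cos (x₂ * ξ)|
      ≤ c * (min (|ξ| * |x₁ - x₂|) 2 * min (|ξ| * |x₁ + x₂|) 2 / 2) := by gcongr
    _ = _ := by ring

lemma MeasureTheory.Integrable.mul_cos_const_mul {g : ℝ → ℝ} (hg : Integrable g) (x : ℝ) :
    Integrable fun ξ => g ξ * cos (x * ξ) :=
  hg.mul_bdd (by fun_prop) (.of_forall fun ξ => abs_cos_le_one (x * ξ))

lemma MeasureTheory.Integrable.min_mul_min_mul {g : ℝ → ℝ} (hg : Integrable g) (a b : ℝ) :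
    Integrable fun ξ => min (|ξ| * |a|) 2 * min (|ξ| * |b|) 2 * g ξ := by
  refine hg.bdd_mul (c := 2 * 2) (by fun_prop) (.of_forall fun ξ => ?_)
  rw [norm_mul]
  gcongr <;> rw [norm_of_nonneg (le_min (by positivity) zero_le_two)] <;> exact min_le_right _ _

theorem fourier_modulus_general (g : ℝ → ℝ)
    (hpos : ∀ ξ : ℝ, 0 < g ξ)
    (hint : Integrable g)
    (heven : ∀ ξ : ℝ, g (-ξ) = g ξ) :
    ∀ x₁ x₂ : ℝ,
      |(∫ ξ : ℝ, g ξ * Real.cos (x₁ * ξ)) - ∫ ξ : ℝ, g ξ * Real.cos (x₂ * ξ)| ≤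
        ∫ ξ in Set.Ioi (0:ℝ),
          min (ξ * |x₁ - x₂|) 2 * min (ξ * |x₁ + x₂|) 2 * g ξ := by
  intro x₁ x₂
  set w : ℝ → ℝ := fun t => min (t * |x₁ - x₂|) 2 * min (t * |x₁ + x₂|) 2 * g t
  have g_abs (ξ : ℝ) : g |ξ| = g ξ := by
    rcases abs_choice ξ with h | h <;> simp only [h, heven]
  calc |(∫ ξ, g ξ * cos (x₁ * ξ)) - ∫ ξ, g ξ * cos (x₂ * ξ)|
      = ‖∫ ξ, (g ξ * cos (x₁ * ξ) - g ξ * cos (x₂ * ξ))‖ := by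
        rw [integral_sub (hint.mul_cos_const_mul x₁) (hint.mul_cos_const_mul x₂), norm_eq_abs]
    _ ≤ ∫ ξ, w |ξ| / 2 := by
        refine norm_integral_le_of_norm_le ?_ (.of_forall fun ξ => ?_)
        · simpa only [w, abs_abs, g_abs] using (hint.min_mul_min_mul _ _).div_const 2
        · simpa only [w, abs_abs, g_abs, norm_eq_abs] using abs_mul_cos_sub_mul_cos_le (hpos ξ).le x₁ x₂ ξ
    _ = ∫ ξ in Ioi 0, w ξ := by
        rw [integral_div, integral_comp_abs]; ring

theorem fourier_modulus (g : ℝ → ℝ)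
    (hpos : ∀ ξ : ℝ, 0 < g ξ)
    (hint : Integrable g)
    (hmono : AntitoneOn g (Set.Ioi 0))
    (heven : ∀ ξ : ℝ, g (-ξ) = g ξ) :
    ∀ x₁ x₂ : ℝ,
      |(∫ ξ : ℝ, g ξ * Real.cos (x₁ * ξ)) - ∫ ξ : ℝ, g ξ * Real.cos (x₂ * ξ)| ≤
        ∫ ξ in Set.Ioi (0:ℝ),
          min (ξ * |x₁ - x₂|) 2 * min (ξ * |x₁ + x₂|) 2 * g ξ :=
  fourier_modulus_general g hpos hint heven
end

section
/- If ψ : (0,∞) → (0,∞) is such that ξ/ψ(ξ) is increasing in ξ > 0, then for all ξ > 0, ∫₀^ξ ζ²/ψ(ζ²) dζ ≤ ξ² ∫_ξ^∞ 1/ψ(ζ²) dζ. -/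
/-!
With `φ ζ := ζ² / ψ(ζ²)`, which is increasing, the left integrand is at most `φ ξ` on `(0, ξ)`,
so the left side is at most `ξ φ ξ`. On `(ξ, ∞)` we have `1 / ψ(ζ²) = φ ζ / ζ² ≥ φ ξ / ζ²`, and
`ξ² ∫_ξ^∞ φ ξ / ζ² dζ = ξ φ ξ` as well.
-/

open MeasureTheory Set

lemma lintegral_Ioi_one_div_sq {a : ℝ} (ha : 0 < a) :
    ∫⁻ x in Ioi a, ENNReal.ofReal (1 / x ^ 2) = ENNReal.ofReal (1 / a) := by
  have hrpow : ∀ x ∈ Ioi a, ENNReal.ofReal (1 / x ^ 2) = ENNReal.ofReal (x ^ (-2 : ℝ)) := by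
    intro x hx
    rw [Real.rpow_neg (ha.trans hx).le, Real.rpow_two, one_div]
  rw [setLIntegral_congr_fun measurableSet_Ioi hrpow,
    ← ofReal_integral_eq_lintegral_ofReal (integrableOn_Ioi_rpow_of_lt (by norm_num) ha)
      ((ae_restrict_mem measurableSet_Ioi).mono fun x hx => Real.rpow_nonneg (ha.trans hx).le _),
    integral_Ioi_rpow_of_lt (by norm_num) ha]
  norm_num [Real.rpow_neg_one]

lemma setLIntegral_Ioo_le_of_monotoneOn {f : ℝ → ℝ} {a b : ℝ} (hf : MonotoneOn f (Ioc a b))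
    (hab : a < b) :
    ∫⁻ x in Ioo a b, ENNReal.ofReal (f x) ≤ ENNReal.ofReal (f b) * ENNReal.ofReal (b - a) :=
  calc ∫⁻ x in Ioo a b, ENNReal.ofReal (f x)
      ≤ ∫⁻ _ in Ioo a b, ENNReal.ofReal (f b) :=
        setLIntegral_mono' measurableSet_Ioo fun x hx =>
          ENNReal.ofReal_le_ofReal (hf (Ioo_subset_Ioc_self hx) (right_mem_Ioc.2 hab) hx.2.le)
    _ = ENNReal.ofReal (f b) * ENNReal.ofReal (b - a) := by
        rw [setLIntegral_const, Real.volume_Ioo]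

lemma ofReal_div_le_setLIntegral_Ioi_div_sq_of_monotoneOn {f : ℝ → ℝ} {a : ℝ}
    (hf : MonotoneOn f (Ici a)) (ha : 0 < a) :
    ENNReal.ofReal (f a / a) ≤ ∫⁻ x in Ioi a, ENNReal.ofReal (f x / x ^ 2) :=
  calc ENNReal.ofReal (f a / a)
      = ∫⁻ x in Ioi a, ENNReal.ofReal (f a) * ENNReal.ofReal (1 / x ^ 2) := by
        rw [lintegral_const_mul' _ _ ENNReal.ofReal_ne_top, lintegral_Ioi_one_div_sq ha,
          ← ENNReal.ofReal_mul' (by positivity), mul_one_div]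
    _ ≤ ∫⁻ x in Ioi a, ENNReal.ofReal (f x / x ^ 2) :=
        setLIntegral_mono' measurableSet_Ioi fun x hx => by
          rw [← ENNReal.ofReal_mul' (by positivity), mul_one_div]
          exact ENNReal.ofReal_le_ofReal <|
            div_le_div_of_nonneg_right (hf self_mem_Ici (Ioi_subset_Ici_self hx) hx.le)
              (sq_nonneg x)

theorem integral_comparison_incr_ratio_general (ψ : ℝ → ℝ)
    (hmono : MonotoneOn (fun ξ => ξ / ψ ξ) (Set.Ioi 0)) :
    ∀ ξ ∈ Set.Ioi (0:ℝ),
      (∫⁻ ζ in Set.Ioo (0:ℝ) ξ, ENNReal.ofReal (ζ ^ 2 / ψ (ζ ^ 2))) ≤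
        ENNReal.ofReal (ξ ^ 2) *
          ∫⁻ ζ in Set.Ioi ξ, ENNReal.ofReal (1 / ψ (ζ ^ 2)) := by
  intro ξ (hξ : 0 < ξ)
  set φ : ℝ → ℝ := fun ζ => ζ ^ 2 / ψ (ζ ^ 2)
  have hφ : MonotoneOn φ (Ioi 0) :=
    hmono.comp (pow_left_monotoneOn.mono Ioi_subset_Ici_self) fun _ hζ => mem_Ioi.2 (pow_pos hζ 2)
  have htail :
      ∀ ζ ∈ Ioi ξ, ENNReal.ofReal (1 / ψ (ζ ^ 2)) = ENNReal.ofReal (φ ζ / ζ ^ 2) :=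
    fun ζ hζ => by rw [div_div_cancel_left' (pow_pos (hξ.trans hζ) 2).ne', one_div]
  calc (∫⁻ ζ in Ioo (0:ℝ) ξ, ENNReal.ofReal (φ ζ))
      ≤ ENNReal.ofReal (φ ξ) * ENNReal.ofReal (ξ - 0) :=
        setLIntegral_Ioo_le_of_monotoneOn (hφ.mono Ioc_subset_Ioi_self) hξ
    _ = ENNReal.ofReal (ξ ^ 2) * ENNReal.ofReal (φ ξ / ξ) := by
        rw [← ENNReal.ofReal_mul' (sub_nonneg.2 hξ.le), ← ENNReal.ofReal_mul (sq_nonneg ξ),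
          sub_zero]
        congr 1
        field_simp
    _ ≤ ENNReal.ofReal (ξ ^ 2) * ∫⁻ ζ in Ioi ξ, ENNReal.ofReal (1 / ψ (ζ ^ 2)) := by
        rw [setLIntegral_congr_fun measurableSet_Ioi htail]
        gcongr
        exact ofReal_div_le_setLIntegral_Ioi_div_sq_of_monotoneOn
          (hφ.mono (Ici_subset_Ioi.2 hξ)) hξ

theorem integral_comparison_incr_ratio (ψ : ℝ → ℝ)
    (hpos : ∀ ξ ∈ Set.Ioi (0:ℝ), 0 < ψ ξ)
    (hmono : MonotoneOn (fun ξ => ξ / ψ ξ) (Set.Ioi 0)) :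
    ∀ ξ ∈ Set.Ioi (0:ℝ),
      (∫⁻ ζ in Set.Ioo (0:ℝ) ξ, ENNReal.ofReal (ζ ^ 2 / ψ (ζ ^ 2))) ≤
        ENNReal.ofReal (ξ ^ 2) *
          ∫⁻ ζ in Set.Ioi ξ, ENNReal.ofReal (1 / ψ (ζ ^ 2)) :=
  integral_comparison_incr_ratio_general ψ hmono
end
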